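/- Let δ ≥ 4 be an integer. For every i ∈ {1,…,6} and every P ∈ ℤ³ such that the tetrahedron Tⁱ_P is contained in the simplex Γ_δ, it is impossible that Tⁱ_P has an edge contained in each of the four facets of Γ_δ; that is, there do not simultaneously exist edges e₁, e₂, e₃, e₄ of Tⁱ_P (segments joining two of its vertices) with e₁ contained in the plane {x₁ = 0}, e₂ contained in {x₂ = 0}, e₃ contained in {x₃ = 0}, and e₄ contained in {x₁ + x₂ + x₃ = δ}. -/

import Mathlib

/-- The vertices of the six tetrahedra `Tⁱ_P` subdividing the unit cube with lowest corner
`P = (p,q,r)`, as integer points. -/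
def tetVerts (i : Fin 6) (p q r : ℤ) : Fin 4 → (Fin 3 → ℤ) :=
  match i with
  | 0 => ![![p, q, r], ![p + 1, q, r], ![p, q + 1, r], ![p, q, r + 1]]
  | 1 => ![![p + 1, q + 1, r], ![p + 1, q, r], ![p, q + 1, r], ![p, q, r + 1]]
  | 2 => ![![p + 1, q, r], ![p + 1, q + 1, r], ![p, q, r + 1], ![p + 1, q, r + 1]]
  | 3 => ![![p, q + 1, r], ![p + 1, q + 1, r], ![p, q, r + 1], ![p, q + 1, r + 1]]
  | 4 => ![![p + 1, q + 1, r], ![p + 1, q, r + 1], ![p, q + 1, r + 1], ![p, q, r + 1]]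
  | 5 => ![![p + 1, q + 1, r], ![p + 1, q, r + 1], ![p, q + 1, r + 1], ![p + 1, q + 1, r + 1]]

/-- The tetrahedron `Tⁱ_P ⊆ ℝ³`: the convex hull of its four vertices. -/
noncomputable def tet (i : Fin 6) (p q r : ℤ) : Set (Fin 3 → ℝ) :=
  convexHull ℝ (Set.range fun a : Fin 4 => fun k : Fin 3 => ((tetVerts i p q r a k : ℤ) : ℝ))

/-- The simplex `Γ_δ` with vertices `(0,0,0), (δ,0,0), (0,δ,0), (0,0,δ)`. -/
def Gammaδ (δ : ℤ) : Set (Fin 3 → ℝ) :=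
  {x | 0 ≤ x 0 ∧ 0 ≤ x 1 ∧ 0 ≤ x 2 ∧ x 0 + x 1 + x 2 ≤ (δ : ℝ)}

/-!
Every coordinate of a vertex of `Tⁱ_P` is `P k` or `P k + 1`. A vertex on the facet `x k = 0`
therefore forces `P k ≤ 0`, so once the first three facets are met, every vertex has coordinate
sum at most `3 < δ` and none lies on the fourth facet.
-/

theorem tetVerts_mem_Icc (i : Fin 6) (p q r : ℤ) (a : Fin 4) (k : Fin 3) :
    tetVerts i p q r a k ∈ Set.Icc (![p, q, r] k) (![p, q, r] k + 1) := by
  fin_cases i <;> fin_cases a <;> fin_cases k <;> simp [tetVerts]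

theorem no_tet_with_four_exits_general (δ : ℤ) (hδ : 4 ≤ δ) (i : Fin 6) (p q r : ℤ) :
    ¬ ((∃ a b : Fin 4, a ≠ b ∧ tetVerts i p q r a 0 = 0 ∧ tetVerts i p q r b 0 = 0) ∧
       (∃ a b : Fin 4, a ≠ b ∧ tetVerts i p q r a 1 = 0 ∧ tetVerts i p q r b 1 = 0) ∧
       (∃ a b : Fin 4, a ≠ b ∧ tetVerts i p q r a 2 = 0 ∧ tetVerts i p q r b 2 = 0) ∧
       (∃ a b : Fin 4, a ≠ b ∧
         tetVerts i p q r a 0 + tetVerts i p q r a 1 + tetVerts i p q r a 2 = δ ∧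
         tetVerts i p q r b 0 + tetVerts i p q r b 1 + tetVerts i p q r b 2 = δ)) := by
  rintro ⟨⟨a₀, -, -, h₀, -⟩, ⟨a₁, -, -, h₁, -⟩, ⟨a₂, -, -, h₂, -⟩, ⟨a, -, -, ha, -⟩⟩
  have hp : p ≤ 0 := h₀ ▸ (tetVerts_mem_Icc i p q r a₀ 0).1
  have hq : q ≤ 0 := h₁ ▸ (tetVerts_mem_Icc i p q r a₁ 1).1
  have hr : r ≤ 0 := h₂ ▸ (tetVerts_mem_Icc i p q r a₂ 2).1
  have hx : tetVerts i p q r a 0 ≤ p + 1 := (tetVerts_mem_Icc i p q r a 0).2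
  have hy : tetVerts i p q r a 1 ≤ q + 1 := (tetVerts_mem_Icc i p q r a 1).2
  have hz : tetVerts i p q r a 2 ≤ r + 1 := (tetVerts_mem_Icc i p q r a 2).2
  omega

/-- For `δ ≥ 4`, no tetrahedron `Tⁱ_P` contained in `Γ_δ` can have an edge in each of the four
facets of `Γ_δ` (i.e., there are no subcomplexes of type 3I in the subdivision `S_{α,δ}`). -/
theorem no_tet_with_four_exits (δ : ℤ) (hδ : 4 ≤ δ) (i : Fin 6) (p q r : ℤ)
    (hsub : tet i p q r ⊆ Gammaδ δ) :
    ¬ ((∃ a b : Fin 4, a ≠ b ∧ tetVerts i p q r a 0 = 0 ∧ tetVerts i p q r b 0 = 0) ∧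
       (∃ a b : Fin 4, a ≠ b ∧ tetVerts i p q r a 1 = 0 ∧ tetVerts i p q r b 1 = 0) ∧
       (∃ a b : Fin 4, a ≠ b ∧ tetVerts i p q r a 2 = 0 ∧ tetVerts i p q r b 2 = 0) ∧
       (∃ a b : Fin 4, a ≠ b ∧
         tetVerts i p q r a 0 + tetVerts i p q r a 1 + tetVerts i p q r a 2 = δ ∧
         tetVerts i p q r b 0 + tetVerts i p q r b 1 + tetVerts i p q r b 2 = δ)) :=
  no_tet_with_four_exits_general δ hδ i p q r
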